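/- arXiv:2508.07883 — 11 statements merged into one kernel-verified Lean document; each statement's English description precedes it below -/
import Mathlib

section
/- Let B be a left brace with B³ = 0. Then for all a, c ∈ B: a⁻¹ ∗ c = −(a ∗ c), where a⁻¹ is the multiplicative inverse of a. -/
/-- A left brace: an abelian group `(B,+)` and a group `(B,·)` on the same set,
with common identity (`0 = 1`), satisfying `a·(b+c) = a·b − a + a·c`. -/
class LeftBrace (B : Type*) extends AddCommGroup B, Group B where
  zero_eq_one : (0 : B) = 1
  brace_distrib : ∀ a b c : B, a * (b + c) = a * b - a + a * c

/-- The star operation `a ∗ b = a·b − a − b`. -/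
def bstar {B : Type*} [LeftBrace B] (a b : B) : B := a * b - a - b

lemma lb_mul_zero {B : Type*} [LeftBrace B] (a : B) : a * 0 = a := by
  rw [LeftBrace.zero_eq_one, mul_one]

lemma lb_mul_neg {B : Type*} [LeftBrace B] (a y : B) : a * (-y) = a + a - a * y := by
  have h := LeftBrace.brace_distrib a y (-y)
  rw [add_neg_cancel, lb_mul_zero] at h
  have h2 : a * -y - (a + a - a * y) = (a * y - a + a * -y) - a := by abel
  rw [← h, sub_self] at h2
  exact sub_eq_zero.mp h2

lemma lb_mul_sub {B : Type*} [LeftBrace B] (a x y : B) :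
    a * (x - y) = a * x - a * y + a := by
  rw [sub_eq_add_neg, LeftBrace.brace_distrib, lb_mul_neg]; abel

theorem stmt3 {B : Type*} [LeftBrace B]
    (hB3 : ∀ a b c : B, bstar a (bstar b c) = 0) (a c : B) :
    bstar a⁻¹ c = -(bstar a c) := by
  have h := hB3 a a⁻¹ c
  unfold bstar at h ⊢
  rw [lb_mul_sub, lb_mul_sub, mul_inv_cancel, ← LeftBrace.zero_eq_one] at h
  have hz : (0 : B) * c = c := by rw [LeftBrace.zero_eq_one, one_mul]
  have hac : a * (a⁻¹ * c) = c := by rw [← mul_assoc, mul_inv_cancel, ← LeftBrace.zero_eq_one, hz]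
  rw [hac] at h
  have h3 : (a⁻¹ * c - a⁻¹ - c) - (-(a * c - a - c))
      = -(c - 0 + a - a * c + a - a - (a⁻¹ * c - a⁻¹ - c)) := by abel
  rw [h, neg_zero] at h3
  exact sub_eq_zero.mp h3
end

section
/- Let B be a left brace with B³ = 0 and let c = x ∗ y for some x, y ∈ B. Then for every integer m, the m-th multiplicative power of c equals the m-fold additive multiple: cᵐ = m·c (additive scalar multiple). -/
theorem stmt5 {B : Type*} [LeftBrace B]
    (hB3 : ∀ a b c : B, bstar a (bstar b c) = 0)
    (c x y : B) (hc : c = bstar x y) (m : ℤ) :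
    c ^ m = m • c := by
  have hmul : ∀ a : B, a * c = a + c := by
    intro a
    have h := hB3 a x y
    rw [← hc] at h
    unfold bstar at h
    rw [sub_sub, sub_eq_zero] at h
    exact h
  have hn : ∀ (n : ℕ) (a : B), a * c ^ n = a + n • c := by
    intro n
    induction n with
    | zero => intro a; simp [← LeftBrace.zero_eq_one]
    | succ k ih =>
      intro a
      rw [pow_succ, ← mul_assoc, hmul, ih, succ_nsmul, add_assoc]
  have hpow : ∀ n : ℕ, c ^ (n : ℤ) = (n : ℤ) • c := by
    intro n
    have := hn n 1
    rw [one_mul, ← LeftBrace.zero_eq_one, zero_add] at this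
    rw [zpow_natCast, this, natCast_zsmul]
  have hinv : ∀ n : ℕ, c ^ (-(n : ℤ)) = (-(n : ℤ)) • c := by
    intro n
    have h1 : (c ^ n)⁻¹ * c ^ n = 1 := inv_mul_cancel _
    rw [hn n ((c ^ n)⁻¹), ← LeftBrace.zero_eq_one] at h1
    have h2 : (c ^ n)⁻¹ = -(n • c) := by
      have := h1
      linear_combination (norm := abel) this
    rw [zpow_neg, zpow_natCast, h2, neg_zsmul, natCast_zsmul]
  obtain ⟨n, rfl | rfl⟩ := m.eq_nat_or_neg
  · exact hpow n
  · exact hinv n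
end

section
/- Let B be a left brace with B³ = 0. Then for every a ∈ B: a ∗ a = a + a⁻¹, where a⁻¹ is the multiplicative inverse of a. Consequently a ∗ a = a⁻¹ ∗ a⁻¹. -/
lemma bstar_self_key {B : Type*} [LeftBrace B]
    (hB3 : ∀ a b c : B, bstar a (bstar b c) = 0) (a : B) :
    bstar a a = a + a⁻¹ := by
  have h01 : (0 : B) = 1 := LeftBrace.zero_eq_one
  have hd := LeftBrace.brace_distrib (B := B)
  have hz : ∀ x : B, x * (0 : B) = x := fun x => by rw [h01, mul_one]
  have hx : bstar a⁻¹ a = -a⁻¹ - a := by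
    unfold bstar; rw [inv_mul_cancel, ← h01]; abel
  have h3 := hB3 a a⁻¹ a
  rw [hx] at h3
  unfold bstar at h3
  have e2 : a * (-a⁻¹) = a + a := by
    have h := hd a a⁻¹ (-a⁻¹)
    rw [add_neg_cancel, hz, mul_inv_cancel, ← h01] at h
    have h2 : a * (-a⁻¹) = a - (0 - a) := by
      rw [eq_sub_iff_add_eq, add_comm]; exact h.symm
    rw [h2]; abel
  have e3 : a * (-a) = a + a - a * a := by
    have h := hd a a (-a)
    rw [add_neg_cancel, hz] at h
    calc a * (-a) = (a * a - a + a * (-a)) - a * a + a := by abel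
    _ = a - a * a + a := by rw [← h]
    _ = a + a - a * a := by abel
  have e1 : a * (-a⁻¹ - a) = a * (-a⁻¹) - a + a * (-a) := by
    rw [sub_eq_add_neg]; exact hd a (-a⁻¹) (-a)
  rw [e1, e2, e3] at h3
  unfold bstar
  rw [← sub_eq_zero]
  calc a * a - a - a - (a + a⁻¹)
      = -(a + a - a + (a + a - a * a) - a - (-a⁻¹ - a)) := by abel
    _ = -(0 : B) := by rw [h3]
    _ = 0 := neg_zero

theorem stmt7 {B : Type*} [LeftBrace B]
    (hB3 : ∀ a b c : B, bstar a (bstar b c) = 0) (a : B) :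
    bstar a a = a + a⁻¹ ∧ bstar a a = bstar a⁻¹ a⁻¹ := by
  have h1 := bstar_self_key hB3 a
  have h2 := bstar_self_key hB3 a⁻¹
  rw [inv_inv] at h2
  exact ⟨h1, by rw [h1, h2, add_comm]⟩
end

section
/- Let B be a left brace with B³ = 0. Then for every a ∈ B and every positive integer m: the multiplicative power satisfies aᵐ = m·a + (m(m−1)/2)·(a ∗ a), where the right-hand side is computed in the additive group. -/
/-- `bstar a` as an additive monoid hom. -/
def bstarHom {B : Type*} [LeftBrace B] (a : B) : B →+ B where
  toFun := bstar a
  map_zero' := by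
    simp [bstar, LeftBrace.zero_eq_one (B := B)]
  map_add' := fun b c => by
    simp only [bstar, LeftBrace.brace_distrib]
    abel

lemma mul_eq_bstar_add {B : Type*} [LeftBrace B] (a x : B) :
    a * x = bstar a x + a + x := by
  simp only [bstar]; abel

theorem stmt8 {B : Type*} [LeftBrace B]
    (hB3 : ∀ a b c : B, bstar a (bstar b c) = 0) (a : B) (m : ℕ) (hm : 0 < m) :
    a ^ m = (m : ℤ) • a + (((m : ℤ) * ((m : ℤ) - 1)) / 2) • bstar a a := by
  clear hm
  induction m with
  | zero => simpa using (LeftBrace.zero_eq_one (B := B)).symm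
  | succ m ih =>
    have hstar : bstar a (a ^ m) = (m : ℤ) • bstar a a := by
      rw [ih]
      have h1 : bstar a ((m : ℤ) • a + (((m : ℤ) * ((m : ℤ) - 1)) / 2) • bstar a a)
          = (m : ℤ) • bstar a a
            + (((m : ℤ) * ((m : ℤ) - 1)) / 2) • bstar a (bstar a a) := by
        calc bstar a ((m : ℤ) • a + (((m : ℤ) * ((m : ℤ) - 1)) / 2) • bstar a a)
            = bstarHom a ((m : ℤ) • a + (((m : ℤ) * ((m : ℤ) - 1)) / 2) • bstar a a) := rfl
          _ = _ := by rw [map_add, map_zsmul, map_zsmul]; rfl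
      rw [h1, hB3 a a a, smul_zero, add_zero]
    have hdiv : (((m : ℤ) + 1) * (((m : ℤ) + 1) - 1)) / 2
        = ((m : ℤ) * ((m : ℤ) - 1)) / 2 + (m : ℤ) := by
      have he : (2 : ℤ) ∣ (m : ℤ) * ((m : ℤ) - 1) := by
        obtain ⟨k, hk⟩ := Int.even_mul_succ_self ((m : ℤ) - 1)
        exact ⟨k, by rw [show (m : ℤ) * ((m : ℤ) - 1)
          = ((m : ℤ) - 1) * ((m : ℤ) - 1 + 1) from by ring, hk]; ring⟩
      have hy : ((m : ℤ) + 1) * (((m : ℤ) + 1) - 1) = (m : ℤ) * ((m : ℤ) - 1) + 2 * m := by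
        ring
      omega
    rw [pow_succ', mul_eq_bstar_add, hstar, ih]
    push_cast
    rw [hdiv]
    rw [add_smul, add_smul, one_smul]
    abel
end

section
/- Let B be a left brace with B³ = 0. Then for every a ∈ B and every integer m (including negative m): aᵐ = m·a + (m(m−1)/2)·(a ∗ a), where aᵐ is the multiplicative power (using multiplicative inverses for negative m) and the right-hand side is additive. -/
theorem eq_zpow_of_map_add_one {G : Type*} [Group G] (g : G) (f : ℤ → G) (h0 : f 0 = 1)
    (hsucc : ∀ n, f (n + 1) = g * f n) (n : ℤ) : f n = g ^ n := by
  induction n using Int.induction_on with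
  | zero => rw [h0, zpow_zero]
  | succ i ih => rw [hsucc, ih, mul_self_zpow]
  | pred i ih =>
    apply mul_left_cancel (a := g)
    rw [← hsucc, sub_add_cancel, ih, mul_self_zpow, sub_add_cancel]

theorem Int.mul_add_one_div_two (n : ℤ) : (n + 1) * n / 2 = n * (n - 1) / 2 + n := by
  rw [show (n + 1) * n = n * (n - 1) + n * 2 by ring,
    Int.add_mul_ediv_right _ _ two_ne_zero]

namespace LeftBrace

variable {B : Type*} [LeftBrace B]

theorem mul_eq_add_add_bstar (x y : B) : x * y = x + y + bstar x y := by
  unfold bstar; abel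

theorem bstar_add (a x y : B) : bstar a (x + y) = bstar a x + bstar a y := by
  unfold bstar; rw [brace_distrib]; abel

def bstarHom (a : B) : B →+ B :=
  AddMonoidHom.mk' (bstar a) (bstar_add a)

theorem bstar_zsmul (a : B) (n : ℤ) (x : B) : bstar a (n • x) = n • bstar a x :=
  (bstarHom a).map_zsmul n x

theorem mul_zsmul_add_zsmul_bstar {a : B} (ha : bstar a (bstar a a) = 0) (m k : ℤ) :
    a * (m • a + k • bstar a a) = (m + 1) • a + (k + m) • bstar a a := by
  rw [mul_eq_add_add_bstar, bstar_add, bstar_zsmul, bstar_zsmul, ha, smul_zero]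
  module

end LeftBrace

theorem stmt9 {B : Type*} [LeftBrace B]
    (hB3 : ∀ a b c : B, bstar a (bstar b c) = 0) (a : B) (m : ℤ) :
    a ^ m = m • a + ((m * (m - 1)) / 2) • bstar a a := by
  refine (eq_zpow_of_map_add_one a (fun n : ℤ => n • a + (n * (n - 1) / 2) • bstar a a)
    ?_ ?_ m).symm
  · simp [← LeftBrace.zero_eq_one]
  · intro n
    rw [LeftBrace.mul_zsmul_add_zsmul_bstar (hB3 a a a), add_sub_cancel_right,
      Int.mul_add_one_div_two]
end

section
/- Let B be a left brace with B³ = 0. Then for every a ∈ B and every integer m: m·a = aᵐ · (a ∗ a)^s in the multiplicative group, where s = −m(m−1)/2. -/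
/-!
In a left brace `x * y = x + λₓ y` with `λₓ y = x * y - x` additive in `y`, and `x ∗ y = λₓ y - y`.
When `B³ = 0`, the element `t = a ∗ a` is fixed by every `λₓ`, so multiplying by `a` acts on the
span of `a` and `t` by `k • a + c • t ↦ (k + 1) • a + (k + c) • t`. Hence
`aⁿ = n • a + (n (n - 1) / 2) • t` and `tⁿ = n • t`, and multiplying `aᵐ` by `t ^ (-m (m - 1) / 2)`
cancels the `t`-component.
-/

theorem zpow_eq_of_mul_eq_succ {G : Type*} [Group G] (a : G) (P : ℤ → G) (h0 : P 0 = 1)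
    (hsucc : ∀ n, a * P n = P (n + 1)) (n : ℤ) : a ^ n = P n := by
  induction n using Int.induction_on with
  | zero => rw [zpow_zero, h0]
  | succ k ih => rw [← hsucc, ← ih, ← zpow_one_add, add_comm]
  | pred k ih =>
    have h := hsucc (-k - 1)
    rw [sub_add_cancel, ← ih] at h
    rw [eq_inv_mul_of_mul_eq h, ← zpow_neg_one, ← zpow_add, neg_add_eq_sub]

theorem Int.mul_sub_one_ediv_two_add_self (n : ℤ) :
    n * (n - 1) / 2 + n = (n + 1) * (n + 1 - 1) / 2 := by
  rw [← Int.add_mul_ediv_right _ _ two_ne_zero]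
  ring_nf

namespace LeftBrace

variable {B : Type*} [LeftBrace B]

def lambda (x : B) : B →+ B :=
  AddMonoidHom.mk' (fun y => x * y - x) fun y z => by
    simp only [brace_distrib]
    abel

theorem mul_eq_add_lambda (x y : B) : x * y = x + lambda x y := by
  simp [lambda]

theorem bstar_eq_lambda_sub (x y : B) : bstar x y = lambda x y - y := by
  simp [bstar, lambda]

theorem lambda_eq_self_of_bstar_eq_zero {x y : B} (h : bstar x y = 0) : lambda x y = y := by
  rwa [bstar_eq_lambda_sub, sub_eq_zero] at h

theorem mul_zsmul_of_lambda_eq_self {x t : B} (h : lambda x t = t) (k : ℤ) :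
    x * (k • t) = x + k • t := by
  rw [mul_eq_add_lambda, map_zsmul, h]

theorem zpow_eq_zsmul_of_lambda_eq_self {t : B} (h : lambda t t = t) (n : ℤ) : t ^ n = n • t := by
  refine zpow_eq_of_mul_eq_succ t (· • t) (by rw [zero_smul, zero_eq_one]) (fun k => ?_) n
  rw [mul_zsmul_of_lambda_eq_self h, add_smul, one_smul, add_comm]

theorem zpow_eq_of_lambda_bstar_self {a : B} (h : lambda a (bstar a a) = bstar a a) (n : ℤ) :
    a ^ n = n • a + (n * (n - 1) / 2) • bstar a a := by
  have ha : lambda a a = a + bstar a a := by rw [bstar_eq_lambda_sub]; abel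
  refine zpow_eq_of_mul_eq_succ a (fun n => n • a + (n * (n - 1) / 2) • bstar a a)
    (by simp [zero_eq_one]) (fun k => ?_) n
  rw [mul_eq_add_lambda, map_add, map_zsmul, map_zsmul, ha, h,
    ← Int.mul_sub_one_ediv_two_add_self, smul_add, add_smul, add_smul, one_smul]
  abel

end LeftBrace

open LeftBrace in
theorem stmt10 {B : Type*} [LeftBrace B]
    (hB3 : ∀ a b c : B, bstar a (bstar b c) = 0) (a : B) (m : ℤ) :
    m • a = a ^ m * (bstar a a) ^ (-(m * (m - 1) / 2)) := by
  have hfix : ∀ x : B, lambda x (bstar a a) = bstar a a := fun x =>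
    lambda_eq_self_of_bstar_eq_zero (hB3 x a a)
  rw [zpow_eq_zsmul_of_lambda_eq_self (hfix _), mul_zsmul_of_lambda_eq_self (hfix _),
    zpow_eq_of_lambda_bstar_self (hfix a), neg_smul, add_neg_cancel_right]
end

section
/- Let B be a left brace with B³ = 0 (i.e. a ∗ (b ∗ c) = 0 for all a,b,c). Then B is right nilpotent of class at most 3, i.e. ((a ∗ b) ∗ c) ∗ d = 0 for all a, b, c, d ∈ B. -/
/-- From `B³ = 0`, every star element is fixed: `a · (b ∗ c) = a + (b ∗ c)`. -/
lemma brace_fix {B : Type*} [LeftBrace B]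
    (hB3 : ∀ a b c : B, bstar a (bstar b c) = 0) (x y z : B) :
    x * bstar y z = x + bstar y z := by
  have h := hB3 x y z
  unfold bstar at h
  rwa [sub_sub, sub_eq_zero] at h

/-- Under `B³ = 0`, `x ↦ x ∗ z` is a homomorphism from `(B,·)` to `(B,+)`. -/
lemma star_mul_left {B : Type*} [LeftBrace B]
    (hB3 : ∀ a b c : B, bstar a (bstar b c) = 0) (x y z : B) :
    bstar (x * y) z = bstar x z + bstar y z := by
  have h1 : (x * y) * z = x * (bstar y z + (y + z)) := by
    rw [mul_assoc]
    congr 1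
    unfold bstar
    abel
  rw [LeftBrace.brace_distrib, LeftBrace.brace_distrib,
    brace_fix hB3 x y z] at h1
  unfold bstar at h1 ⊢
  rw [h1]
  abel

theorem stmt12 {B : Type*} [LeftBrace B]
    (hB3 : ∀ a b c : B, bstar a (bstar b c) = 0) (a b c d : B) :
    bstar (bstar (bstar a b) c) d = 0 := by
  -- write s = a∗b, t = s∗c; then c·s·t = s·c
  have key : (c * bstar a b) * bstar (bstar a b) c = bstar a b * c := by
    rw [brace_fix hB3 (c * bstar a b) (bstar a b) c, brace_fix hB3 c a b]
    unfold bstar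
    abel
  have h2 := star_mul_left hB3 (c * bstar a b) (bstar (bstar a b) c) d
  rw [key, star_mul_left hB3 (bstar a b) c d,
    star_mul_left hB3 c (bstar a b) d, add_comm (bstar c d)] at h2
  exact (left_eq_add.mp h2)
end

section
/- Let B be a left brace with B³ = 0 generated as a brace by b₁,…,b_r. Then for all indices 1 ≤ i < j ≤ r and 1 ≤ k ≤ r: (bᵢ ∗ bⱼ) ∗ b_k = (bⱼ ∗ bᵢ) ∗ b_k. -/
section Aux
variable {B : Type*} [LeftBrace B]

lemma LeftBrace.one_eq_zero' : (1 : B) = 0 := LeftBrace.zero_eq_one.symm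

/-- The lambda map `λ_a(x) = a·x − a`. -/
def LeftBrace.lam (a x : B) : B := a * x - a

open LeftBrace (lam)

lemma LeftBrace.mul_zero'' (a : B) : a * 0 = a := by
  rw [← LeftBrace.one_eq_zero', mul_one]

lemma LeftBrace.lam_add' (a x y : B) : lam a (x + y) = lam a x + lam a y := by
  simp only [lam, LeftBrace.brace_distrib]; abel

lemma LeftBrace.mul_neg'' (a c : B) : a * (-c) = a - (a * c - a) := by
  have h := LeftBrace.brace_distrib a c (-c)
  rw [add_neg_cancel, LeftBrace.mul_zero''] at h
  rw [eq_sub_iff_add_eq, add_comm]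
  exact h.symm

lemma LeftBrace.lam_mul' (a c x : B) : lam (a * c) x = lam a (lam c x) := by
  unfold lam
  have h : a * (c * x - c) = a * (c * x) + a - a * c := by
    rw [sub_eq_add_neg, LeftBrace.brace_distrib, LeftBrace.mul_neg'']; abel
  rw [h, ← mul_assoc]; abel

lemma LeftBrace.lam_bstar (a x : B) : lam a x = bstar a x + x := by
  simp only [lam, bstar]; abel

lemma LeftBrace.lam_comm' (hB3 : ∀ x y z : B, bstar x (bstar y z) = 0)
    (a c x : B) : lam a (lam c x) = lam c (lam a x) := by
  have h1 : ∀ p q s : B, lam p (bstar q s) = bstar q s := by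
    intro p q s
    rw [LeftBrace.lam_bstar, hB3 p q s, zero_add]
  have L : ∀ p q : B, lam p (lam q x) = bstar q x + bstar p x + x := by
    intro p q
    rw [LeftBrace.lam_bstar q x, LeftBrace.lam_add', h1,
        LeftBrace.lam_bstar p x]; abel
  rw [L a c, L c a]; abel

lemma LeftBrace.x_mul_w (x z : B) : x * (x⁻¹ * z - x⁻¹) = x + z := by
  rw [sub_eq_add_neg, LeftBrace.brace_distrib, LeftBrace.mul_neg'',
      mul_inv_cancel_left, mul_inv_cancel, LeftBrace.one_eq_zero']
  abel

lemma LeftBrace.lam_add_decomp (x z c : B) :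
    lam (x + z) c = lam x (lam (lam x⁻¹ z) c) := by
  rw [← LeftBrace.lam_mul']
  show lam (x + z) c = lam (x * (x⁻¹ * z - x⁻¹)) c
  rw [LeftBrace.x_mul_w]

lemma LeftBrace.bstar_comm_left (hB3 : ∀ x y z : B, bstar x (bstar y z) = 0)
    (a d c : B) : bstar (bstar a d) c = bstar (bstar d a) c := by
  open LeftBrace in
  have hbl : ∀ w : B, bstar w c = lam w c - c := by
    intro w; rw [LeftBrace.lam_bstar]; abel
  rw [hbl, hbl]
  have e1 : bstar a d = a * d + (-a - d) := by unfold bstar; abel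
  have e2 : bstar d a = d * a + (-a - d) := by unfold bstar; abel
  have hinv : ∀ p q z : B, lam (p * q)⁻¹ z = lam (q * p)⁻¹ z := by
    intro p q z
    rw [mul_inv_rev, mul_inv_rev, LeftBrace.lam_mul', LeftBrace.lam_mul',
        LeftBrace.lam_comm' hB3]
  rw [e1, e2, LeftBrace.lam_add_decomp, LeftBrace.lam_add_decomp,
      hinv a d, LeftBrace.lam_mul', LeftBrace.lam_mul',
      LeftBrace.lam_comm' hB3]

end Aux

theorem stmt14 {B : Type*} [LeftBrace B] {r : ℕ} (b : Fin r → B)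
    (hB3 : ∀ a b c : B, bstar a (bstar b c) = 0)
    (hgen : ∀ S : Set B, (0 : B) ∈ S →
      (∀ x ∈ S, ∀ y ∈ S, x + y ∈ S) → (∀ x ∈ S, -x ∈ S) →
      (∀ x ∈ S, ∀ y ∈ S, x * y ∈ S) → (∀ x ∈ S, x⁻¹ ∈ S) →
      (∀ i, b i ∈ S) → ∀ x : B, x ∈ S) :
    ∀ i j k : Fin r, i < j →
      bstar (bstar (b i) (b j)) (b k) = bstar (bstar (b j) (b i)) (b k) := by
  intro i j k _
  exact LeftBrace.bstar_comm_left hB3 (b i) (b j) (b k)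
end

section
/- Fix r ≥ 1 and let D be the free abelian group on the index set consisting of symbols x_i (1≤i≤r), x_{ij} (1≤i,j≤r), x_{iij} (1≤i,j≤r), and x_{ijk} (1≤i<j≤r, 1≤k≤r). Define a multiplication on D coordinatewise by: (d·e)_i = d_i + e_i; (d·e)_{ij} = d_{ij} + e_{ij} + d_i e_j; (d·e)_{iij} = d_{iij} + e_{iij} + (d_{ii} − d_i(d_i−1)/2) e_j; (d·e)_{ijk} = d_{ijk} + e_{ijk} + (d_{ij} − d_i d_j + d_{ji}) e_k for i<j. Then this multiplication is associative. -/
/-- Index set: symbols `x_i`, `x_{ij}`, `x_{iij}`, and `x_{ijk}` for `i < j`. -/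
inductive Idx (r : ℕ) : Type where
  | one : Fin r → Idx r
  | two : Fin r → Fin r → Idx r
  | dup : Fin r → Fin r → Idx r
  | three : (i j : Fin r) → i < j → Fin r → Idx r

/-- Since `Idx r` is finite, all integer-valued functions on it are finitely
supported, so `Idx r → ℤ` is the free abelian group on `Idx r` (pointwise `+`). -/
def dmul {r : ℕ} (d e : Idx r → ℤ) : Idx r → ℤ
  | .one i => d (.one i) + e (.one i)
  | .two i j => d (.two i j) + e (.two i j) + d (.one i) * e (.one j)
  | .dup i j => d (.dup i j) + e (.dup i j)
      + (d (.two i i) - d (.one i) * (d (.one i) - 1) / 2) * e (.one j)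
  | .three i j h k => d (.three i j h k) + e (.three i j h k)
      + (d (.two i j) - d (.one i) * d (.one j) + d (.two j i)) * e (.one k)

lemma tri_add (a b : ℤ) :
    (a + b) * (a + b - 1) / 2 = a * (a - 1) / 2 + b * (b - 1) / 2 + a * b := by
  obtain ⟨p, hp⟩ := Int.even_mul_succ_self (a - 1)
  obtain ⟨q, hq⟩ := Int.even_mul_succ_self (b - 1)
  simp only [sub_add_cancel] at hp hq
  have hab : (a + b) * (a + b - 1) = 2 * (p + q + a * b) := by
    have h1 : a * (a - 1) = 2 * p := by linarith [hp]
    have h2 : b * (b - 1) = 2 * q := by linarith [hq]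
    nlinarith [h1, h2]
  have h1 : a * (a - 1) = 2 * p := by linarith [hp]
  have h2 : b * (b - 1) = 2 * q := by linarith [hq]
  rw [hab, h1, h2]
  omega

theorem stmt16 {r : ℕ} (hr : 1 ≤ r) (d e f : Idx r → ℤ) :
    dmul (dmul d e) f = dmul d (dmul e f) := by
  funext x
  cases x with
  | one i => simp [dmul]; ring
  | two i j => simp [dmul]; ring
  | dup i j =>
    simp only [dmul]
    rw [tri_add]
    ring
  | three i j h k => simp [dmul]; ring
end

section
/- Let D be the brace on the free abelian group over symbols x_i, x_{ij}, x_{iij}, x_{ijk} (with the multiplication as defined: (d·e)_i = d_i+e_i; (d·e)_{ij} = d_{ij}+e_{ij}+d_i e_j; (d·e)_{iij} = d_{iij}+e_{iij}+(d_{ii}−d_i(d_i−1)/2)e_j; (d·e)_{ijk} = d_{ijk}+e_{ijk}+(d_{ij}−d_i d_j+d_{ji})e_k). Then D is left nilpotent of class at most 2: d ∗ (e ∗ f) = 0 for all d,e,f ∈ D, where d ∗ e = d·e − d − e. -/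
/-- The star operation of the brace `D`. -/
def dstar {r : ℕ} (d e : Idx r → ℤ) : Idx r → ℤ := dmul d e - d - e

theorem stmt18 {r : ℕ} (d e f : Idx r → ℤ) :
    dstar d (dstar e f) = 0 := by
  have h1 : ∀ j, dstar e f (.one j) = 0 := by
    intro j; simp [dstar, dmul]
  funext x
  cases x <;> simp [dstar, dmul, h1]
end

section
/- Let D be the brace on the free abelian group over symbols x_i, x_{ij}, x_{iij}, x_{ijk} with the stated multiplication. Then the generators satisfy: x_i ∗ x_j = x_{ij} for all 1≤i,j≤r; (x_i ∗ x_i) ∗ x_j = x_{iij} for all 1≤i,j≤r; and (x_i ∗ x_j) ∗ x_k = x_{ijk} for all 1≤i<j≤r, 1≤k≤r, where d ∗ e = d·e − d − e. Consequently D is generated as a brace by x_1,…,x_r. -/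
open Classical in
/-- The basis element supported at index `α` with value `1`. -/
noncomputable def X {r : ℕ} (α : Idx r) : Idx r → ℤ := fun β => if β = α then 1 else 0

instance (r : ℕ) : Finite (Idx r) :=
  Finite.of_injective (β := Fin r ⊕ (Fin r × Fin r) ⊕ (Fin r × Fin r) ⊕ (Fin r × Fin r × Fin r))
    (fun
      | .one i => .inl i
      | .two i j => .inr (.inl (i, j))
      | .dup i j => .inr (.inr (.inl (i, j)))
      | .three i j _ k => .inr (.inr (.inr (i, j, k))))
    (by rintro (_ | _ | _ | _) (_ | _ | _ | _) h <;> simp_all)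

theorem AddSubgroup.eq_top_of_forall_single_one_mem {ι : Type*} [Finite ι] [DecidableEq ι]
    {H : AddSubgroup (ι → ℤ)} (h : ∀ i, Pi.single i 1 ∈ H) : H = ⊤ :=
  eq_top_iff.2 fun f _ => Pi.single_induction (· ∈ H) f H.zero_mem (fun _ _ => H.add_mem)
    fun i m => by simpa [← Pi.single_smul'] using H.zsmul_mem (h i) m

section Brace

variable {r : ℕ}

@[simp] lemma dstar_one (d e : Idx r → ℤ) (i : Fin r) : dstar d e (.one i) = 0 := by
  simp [dstar, dmul]

@[simp] lemma dstar_two (d e : Idx r → ℤ) (i j : Fin r) :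
    dstar d e (.two i j) = d (.one i) * e (.one j) := by
  simp only [dstar, dmul, Pi.sub_apply]; ring

@[simp] lemma dstar_dup (d e : Idx r → ℤ) (i j : Fin r) :
    dstar d e (.dup i j) = (d (.two i i) - d (.one i) * (d (.one i) - 1) / 2) * e (.one j) := by
  simp only [dstar, dmul, Pi.sub_apply]; ring

@[simp] lemma dstar_three (d e : Idx r → ℤ) (i j : Fin r) (h : i < j) (k : Fin r) :
    dstar d e (.three i j h k) =
      (d (.two i j) - d (.one i) * d (.one j) + d (.two j i)) * e (.one k) := by
  simp only [dstar, dmul, Pi.sub_apply]; ring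

lemma dstar_X_one_X_one (i j : Fin r) : dstar (X (.one i)) (X (.one j)) = X (.two i j) := by
  funext β
  cases β <;> simp [X] <;> grind

lemma dstar_X_two_X_one (i j : Fin r) : dstar (X (.two i i)) (X (.one j)) = X (.dup i j) := by
  funext β
  cases β <;> simp [X] <;> grind

lemma dstar_X_two_X_one_of_lt {i j : Fin r} (h : i < j) (k : Fin r) :
    dstar (X (.two i j)) (X (.one k)) = X (.three i j h k) := by
  funext β
  cases β <;> simp [X] <;> grind

open scoped Classical in
lemma X_eq_single (α : Idx r) : X α = Pi.single α 1 := by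
  funext β
  simp [X, Pi.single_apply]

lemma dstar_mem {S : AddSubgroup (Idx r → ℤ)} (hmul : ∀ x ∈ S, ∀ y ∈ S, dmul x y ∈ S)
    {d e : Idx r → ℤ} (hd : d ∈ S) (he : e ∈ S) : dstar d e ∈ S :=
  S.sub_mem (S.sub_mem (hmul d hd e he) hd) he

lemma X_mem_of_forall_X_one_mem {S : AddSubgroup (Idx r → ℤ)}
    (hmul : ∀ x ∈ S, ∀ y ∈ S, dmul x y ∈ S) (hgen : ∀ i, X (.one i) ∈ S) (α : Idx r) :
    X α ∈ S := by
  have hstar {d e : Idx r → ℤ} : d ∈ S → e ∈ S → dstar d e ∈ S := dstar_mem hmul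
  cases α with
  | one i => exact hgen i
  | two i j =>
    rw [← dstar_X_one_X_one]
    exact hstar (hgen i) (hgen j)
  | dup i j =>
    rw [← dstar_X_two_X_one, ← dstar_X_one_X_one]
    exact hstar (hstar (hgen i) (hgen i)) (hgen j)
  | three i j h k =>
    rw [← dstar_X_two_X_one_of_lt h, ← dstar_X_one_X_one]
    exact hstar (hstar (hgen i) (hgen j)) (hgen k)

open scoped Classical in
lemma eq_top_of_forall_X_one_mem {S : AddSubgroup (Idx r → ℤ)}
    (hmul : ∀ x ∈ S, ∀ y ∈ S, dmul x y ∈ S) (hgen : ∀ i, X (.one i) ∈ S) : S = ⊤ :=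
  AddSubgroup.eq_top_of_forall_single_one_mem fun α => by
    simpa [X_eq_single] using X_mem_of_forall_X_one_mem hmul hgen α

end Brace

theorem stmt19 {r : ℕ} :
    (∀ i j : Fin r, dstar (X (Idx.one i)) (X (Idx.one j)) = X (Idx.two i j))
    ∧ (∀ i j : Fin r,
        dstar (dstar (X (Idx.one i)) (X (Idx.one i))) (X (Idx.one j)) = X (Idx.dup i j))
    ∧ (∀ (i j : Fin r) (h : i < j) (k : Fin r),
        dstar (dstar (X (Idx.one i)) (X (Idx.one j))) (X (Idx.one k)) = X (Idx.three i j h k))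
    ∧ (∀ S : Set (Idx r → ℤ), (0 : Idx r → ℤ) ∈ S →
        (∀ x ∈ S, ∀ y ∈ S, x + y ∈ S) → (∀ x ∈ S, -x ∈ S) →
        (∀ x ∈ S, ∀ y ∈ S, dmul x y ∈ S) →
        (∀ x ∈ S, ∀ y, dmul x y = 0 → y ∈ S) →
        (∀ i : Fin r, X (Idx.one i) ∈ S) →
        ∀ d : Idx r → ℤ, d ∈ S) := by
  refine ⟨dstar_X_one_X_one, fun i j => ?_, fun i j h k => ?_, ?_⟩
  · rw [dstar_X_one_X_one, dstar_X_two_X_one]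
  · rw [dstar_X_one_X_one, dstar_X_two_X_one_of_lt h]
  intro S h0 hadd hneg hmul _ hgen d
  let H : AddSubgroup (Idx r → ℤ) :=
    { carrier := S, zero_mem' := h0, add_mem' := fun hx hy => hadd _ hx _ hy,
      neg_mem' := fun hx => hneg _ hx }
  have hH : H = ⊤ := eq_top_of_forall_X_one_mem hmul hgen
  exact (hH ▸ AddSubgroup.mem_top d : d ∈ H)
end
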